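/- Let (C, E, s) be an extriangulated category satisfying Condition (WIC), and let (Q, R̃) and (Q̃, R) be hereditary cotorsion pairs with R̃ ⊆ R, Q̃ ⊆ Q, Q̃ ∩ R = Q ∩ R̃. Let W = {X : there exists an E-triangle X → R → Q --> with R ∈ R̃, Q ∈ Q̃}. Then W is closed under extensions: for any E-triangle W → Y → W' --> with W, W' ∈ W, also Y ∈ W. -/

import Mathlib

open CategoryTheory Limits

universe w v u

/-- An extriangulated category structure on an additive category `𝒞`, in the sense of
Nakaoka–Palu: a biadditive `Ab`-valued functor `E` together with an additive realization,
encoded via the predicate `IsTriangle x y δ` meaning that `A ⟶x B ⟶y X` realizes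
`δ ∈ E(X,A)`, satisfying (ET1)–(ET4) and their duals. -/
structure ExtriangulatedStructure (𝒞 : Type u) [Category.{v} 𝒞] [Preadditive 𝒞]
    [HasBinaryBiproducts 𝒞] where
  E : 𝒞 → 𝒞 → AddCommGrpCat.{w}
  pull : ∀ {X' X A : 𝒞}, (X' ⟶ X) → E X A → E X' A
  push : ∀ {X A A' : 𝒞}, (A ⟶ A') → E X A → E X A'
  pull_id : ∀ {X A : 𝒞} (δ : E X A), pull (𝟙 X) δ = δ
  push_id : ∀ {X A : 𝒞} (δ : E X A), push (𝟙 A) δ = δ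
  pull_comp : ∀ {X'' X' X A : 𝒞} (c' : X'' ⟶ X') (c : X' ⟶ X) (δ : E X A),
      pull (c' ≫ c) δ = pull c' (pull c δ)
  push_comp : ∀ {X A A' A'' : 𝒞} (a : A ⟶ A') (a' : A' ⟶ A'') (δ : E X A),
      push (a ≫ a') δ = push a' (push a δ)
  pull_push : ∀ {X' X A A' : 𝒞} (c : X' ⟶ X) (a : A ⟶ A') (δ : E X A),
      pull c (push a δ) = push a (pull c δ)
  pull_add : ∀ {X' X A : 𝒞} (c : X' ⟶ X) (δ δ' : E X A),
      pull c (δ + δ') = pull c δ + pull c δ'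
  push_add : ∀ {X A A' : 𝒞} (a : A ⟶ A') (δ δ' : E X A),
      push a (δ + δ') = push a δ + push a δ'
  add_pull : ∀ {X' X A : 𝒞} (c c' : X' ⟶ X) (δ : E X A),
      pull (c + c') δ = pull c δ + pull c' δ
  add_push : ∀ {X A A' : 𝒞} (a a' : A ⟶ A') (δ : E X A),
      push (a + a') δ = push a δ + push a' δ
  IsTriangle : ∀ {A B X : 𝒞}, (A ⟶ B) → (B ⟶ X) → E X A → Prop
  realize_exists : ∀ {X A : 𝒞} (δ : E X A),
      ∃ (B : 𝒞) (x : A ⟶ B) (y : B ⟶ X), IsTriangle x y δ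
  realize_zero : ∀ (A X : 𝒞),
      IsTriangle (biprod.inl : A ⟶ A ⊞ X) (biprod.snd : A ⊞ X ⟶ X) (0 : E X A)
  realize_sum : ∀ {A B X A' B' X' : 𝒞} (x : A ⟶ B) (y : B ⟶ X) (δ : E X A)
      (x' : A' ⟶ B') (y' : B' ⟶ X') (δ' : E X' A'),
      IsTriangle x y δ → IsTriangle x' y' δ' →
      IsTriangle (biprod.map x x') (biprod.map y y')
        (push biprod.inl (pull biprod.fst δ) + push biprod.inr (pull biprod.snd δ'))
  realize_iso : ∀ {A B B' X : 𝒞} (x : A ⟶ B) (y : B ⟶ X) (δ : E X A) (b : B ≅ B'),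
      IsTriangle x y δ → IsTriangle (x ≫ b.hom) (b.inv ≫ y) δ
  realize_mor : ∀ {A B X A' B' X' : 𝒞} {x : A ⟶ B} {y : B ⟶ X} {δ : E X A}
      {x' : A' ⟶ B'} {y' : B' ⟶ X'} {δ' : E X' A'} (a : A ⟶ A') (c : X ⟶ X'),
      IsTriangle x y δ → IsTriangle x' y' δ' → push a δ = pull c δ' →
      ∃ b : B ⟶ B', x ≫ b = a ≫ x' ∧ y ≫ c = b ≫ y'
  ET3 : ∀ {A B X A' B' X' : 𝒞} {x : A ⟶ B} {y : B ⟶ X} {δ : E X A}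
      {x' : A' ⟶ B'} {y' : B' ⟶ X'} {δ' : E X' A'} (a : A ⟶ A') (b : B ⟶ B'),
      IsTriangle x y δ → IsTriangle x' y' δ' → x ≫ b = a ≫ x' →
      ∃ c : X ⟶ X', push a δ = pull c δ' ∧ y ≫ c = b ≫ y'
  ET3op : ∀ {A B X A' B' X' : 𝒞} {x : A ⟶ B} {y : B ⟶ X} {δ : E X A}
      {x' : A' ⟶ B'} {y' : B' ⟶ X'} {δ' : E X' A'} (b : B ⟶ B') (c : X ⟶ X'),
      IsTriangle x y δ → IsTriangle x' y' δ' → y ≫ c = b ≫ y' →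
      ∃ a : A ⟶ A', push a δ = pull c δ' ∧ x ≫ b = a ≫ x'
  ET4 : ∀ {A B D Cv F : 𝒞} (f : A ⟶ B) (f' : B ⟶ D) (δ : E D A)
      (g : B ⟶ Cv) (g' : Cv ⟶ F) (δ' : E F B),
      IsTriangle f f' δ → IsTriangle g g' δ' →
      ∃ (E₀ : 𝒞) (h : A ⟶ Cv) (h' : Cv ⟶ E₀) (d : D ⟶ E₀) (e : E₀ ⟶ F) (δ'' : E E₀ A),
        IsTriangle h h' δ'' ∧ IsTriangle d e (push f' δ') ∧
        h = f ≫ g ∧ f' ≫ d = g ≫ h' ∧ g' = h' ≫ e ∧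
        pull d δ'' = δ ∧ push f δ'' = pull e δ'
  ET4op : ∀ {D B A F Cv : 𝒞} (i : D ⟶ B) (p : B ⟶ A) (δ : E A D)
      (j : F ⟶ Cv) (q : Cv ⟶ B) (δ' : E B F),
      IsTriangle i p δ → IsTriangle j q δ' →
      ∃ (E₀ : 𝒞) (i' : E₀ ⟶ Cv) (p' : Cv ⟶ A) (m : F ⟶ E₀) (n : E₀ ⟶ D) (δ'' : E A E₀),
        IsTriangle i' p' δ'' ∧ IsTriangle m n (pull i δ') ∧
        p' = q ≫ p ∧ i' ≫ q = n ≫ i ∧ j = m ≫ i' ∧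
        push n δ'' = δ ∧ pull p δ'' = push m δ'

namespace ExtriangulatedStructure

variable {𝒞 : Type u} [Category.{v} 𝒞] [Preadditive 𝒞] [HasBinaryBiproducts 𝒞]
variable (S : ExtriangulatedStructure.{w} 𝒞)

/-- A morphism is an inflation if it occurs as the first map of some `E`-triangle. -/
def IsInflation {A B : 𝒞} (f : A ⟶ B) : Prop :=
  ∃ (X : 𝒞) (g : B ⟶ X) (δ : S.E X A), S.IsTriangle f g δ

/-- A morphism is a deflation if it occurs as the second map of some `E`-triangle. -/
def IsDeflation {B X : 𝒞} (g : B ⟶ X) : Prop :=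
  ∃ (A : 𝒞) (f : A ⟶ B) (δ : S.E X A), S.IsTriangle f g δ

/-- Condition (WIC). -/
def WIC : Prop :=
  (∀ {A B X : 𝒞} (f : A ⟶ B) (g : B ⟶ X), S.IsInflation (f ≫ g) → S.IsInflation f) ∧
  (∀ {A B X : 𝒞} (f : A ⟶ B) (g : B ⟶ X), S.IsDeflation (f ≫ g) → S.IsDeflation g)

/-- `(a, b, c)` is a morphism of `E`-triangles. -/
def IsTriangleMor {A B X A' B' X' : 𝒞} (x : A ⟶ B) (y : B ⟶ X) (δ : S.E X A)
    (x' : A' ⟶ B') (y' : B' ⟶ X') (δ' : S.E X' A')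
    (a : A ⟶ A') (b : B ⟶ B') (c : X ⟶ X') : Prop :=
  x ≫ b = a ≫ x' ∧ y ≫ c = b ≫ y' ∧ S.push a δ = S.pull c δ'

/-- A cotorsion pair `(𝒬, ℛ)`: `E(𝒬, ℛ) = 0` and every object admits the two
approximation `E`-triangles. -/
def CotorsionPair (𝒬 ℛ : Set 𝒞) : Prop :=
  (∀ (Q R : 𝒞), Q ∈ 𝒬 → R ∈ ℛ → ∀ δ : S.E Q R, δ = 0) ∧
  (∀ X : 𝒞, ∃ (R Q : 𝒞) (f : R ⟶ Q) (g : Q ⟶ X) (δ : S.E X R),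
      S.IsTriangle f g δ ∧ Q ∈ 𝒬 ∧ R ∈ ℛ) ∧
  (∀ X : 𝒞, ∃ (R Q : 𝒞) (f : X ⟶ R) (g : R ⟶ Q) (δ : S.E Q X),
      S.IsTriangle f g δ ∧ Q ∈ 𝒬 ∧ R ∈ ℛ)

/-- A cotorsion pair is hereditary if `𝒬` is closed under cocones of deflations and
`ℛ` is closed under cones of inflations. -/
def Hereditary (𝒬 ℛ : Set 𝒞) : Prop :=
  (∀ {A B X : 𝒞} (f : A ⟶ B) (g : B ⟶ X) (δ : S.E X A),
      S.IsTriangle f g δ → B ∈ 𝒬 → X ∈ 𝒬 → A ∈ 𝒬) ∧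
  (∀ {A B X : 𝒞} (f : A ⟶ B) (g : B ⟶ X) (δ : S.E X A),
      S.IsTriangle f g δ → A ∈ ℛ → B ∈ ℛ → X ∈ ℛ)

/-- A class of objects is thick: closed under direct summands and satisfying the
2-out-of-3 property on `E`-triangles. -/
def Thick (𝒲 : Set 𝒞) : Prop :=
  (∀ {X Y : 𝒞}, Y ∈ 𝒲 → (∃ (i : X ⟶ Y) (p : Y ⟶ X), i ≫ p = 𝟙 X) → X ∈ 𝒲) ∧
  (∀ {A B X : 𝒞} (f : A ⟶ B) (g : B ⟶ X) (δ : S.E X A), S.IsTriangle f g δ →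
    (A ∈ 𝒲 → B ∈ 𝒲 → X ∈ 𝒲) ∧ (A ∈ 𝒲 → X ∈ 𝒲 → B ∈ 𝒲) ∧ (B ∈ 𝒲 → X ∈ 𝒲 → A ∈ 𝒲))

/-- `(𝒬, 𝒲, ℛ)` is a Hovey triple. -/
def HoveyTriple (𝒬 𝒲 ℛ : Set 𝒞) : Prop :=
  S.Thick 𝒲 ∧ S.CotorsionPair 𝒬 (𝒲 ∩ ℛ) ∧ S.CotorsionPair (𝒬 ∩ 𝒲) ℛ

end ExtriangulatedStructure

/-!
Write `W₀ ⟶ R₀ ⟶ Q₀` and `W₁ ⟶ R₁ ⟶ Q₁` for the triangles exhibiting `W₀, W₁ ∈ W`, and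
`ε ∈ E(W₁, R₀)` for the pushout of `δ` along `W₀ ⟶ R₀`. Since `E(Q̃, R₀) = 0`, the class `ε`
extends along `W₁ ⟶ R₁` to some `ω ∈ E(R₁, R₀)`; its middle term `T` lies in `R̃`, because the
right half of a hereditary cotorsion pair is closed under extensions. Pulling `ω` back along
`W₁ ⟶ R₁` gives `R₀ ⟶ P ⟶ W₁` realizing `ε` and `P ⟶ T ⟶ Q₁`, and since `ε` is a pushout of `δ`,
also `Y ⟶ P ⟶ Q₀`. By (ET4) the composite `Y ⟶ P ⟶ T` is an inflation whose cone is an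
extension of `Q₁` by `Q₀`, hence lies in `Q̃`.
-/

namespace ExtriangulatedStructure

variable {𝒞 : Type u} [Category.{v} 𝒞] [Preadditive 𝒞] [HasBinaryBiproducts 𝒞]
variable (S : ExtriangulatedStructure.{w} 𝒞)

section Additivity

variable {X' X A A' : 𝒞}

lemma pull_zero (c : X' ⟶ X) : S.pull c (0 : S.E X A) = 0 :=
  (AddMonoidHom.mk' _ (S.pull_add c)).map_zero

lemma push_zero (a : A ⟶ A') : S.push a (0 : S.E X A) = 0 :=
  (AddMonoidHom.mk' _ (S.push_add a)).map_zero

lemma push_sub (a : A ⟶ A') (δ δ' : S.E X A) :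
    S.push a (δ - δ') = S.push a δ - S.push a δ' :=
  (AddMonoidHom.mk' _ (S.push_add a)).map_sub δ δ'

lemma zero_push (δ : S.E X A) : S.push (0 : A ⟶ A') δ = 0 :=
  (AddMonoidHom.mk' (S.push · δ) (S.add_push · · δ)).map_zero

lemma sub_pull (c c' : X' ⟶ X) (δ : S.E X A) :
    S.pull (c - c') δ = S.pull c δ - S.pull c' δ :=
  (AddMonoidHom.mk' (S.pull · δ) (S.add_pull · · δ)).map_sub c c'

end Additivity

variable {S}

section Triangles

variable {A B X K : 𝒞} {x : A ⟶ B} {y : B ⟶ X} {δ : S.E X A}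

lemma comp_eq_zero_of_isTriangle (ht : S.IsTriangle x y δ) : x ≫ y = 0 := by
  obtain ⟨a, -, h⟩ := S.ET3op (biprod.lift (𝟙 B) y) (𝟙 X) ht (S.realize_zero B X) (by simp)
  simpa using congrArg (· ≫ biprod.snd) h

lemma exists_section_of_isTriangle_zero (ht : S.IsTriangle x y 0) :
    ∃ σ : X ⟶ B, σ ≫ y = 𝟙 X := by
  obtain ⟨b, -, hb⟩ := S.realize_mor (𝟙 A) (𝟙 X) (S.realize_zero A X) ht
    (by rw [S.push_id, S.pull_id])
  exact ⟨biprod.inr ≫ b, by simpa using congrArg (biprod.inr ≫ ·) hb.symm⟩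

lemma exists_retraction_of_isTriangle_zero (ht : S.IsTriangle x y 0) :
    ∃ ρ : B ⟶ A, x ≫ ρ = 𝟙 A := by
  obtain ⟨b, hb, -⟩ := S.realize_mor (𝟙 A) (𝟙 X) ht (S.realize_zero A X)
    (by rw [S.push_id, S.pull_id])
  exact ⟨b ≫ biprod.fst, by simpa using congrArg (· ≫ biprod.fst) hb⟩

lemma exists_lift_of_comp_eq_zero (ht : S.IsTriangle x y δ) (φ : K ⟶ B) (hφ : φ ≫ y = 0) :
    ∃ a : K ⟶ A, a ≫ x = φ := by
  obtain ⟨a, -, h⟩ := S.ET3op (biprod.desc φ 0) (0 : K ⟶ X) (S.realize_zero K K) ht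
    (by ext <;> simp [hφ])
  exact ⟨a, by simpa using h.symm⟩

lemma exists_eq_pull_of_push_eq_zero (ht : S.IsTriangle x y δ) (ε : S.E K A)
    (hε : S.push x ε = 0) : ∃ c : K ⟶ X, ε = S.pull c δ := by
  obtain ⟨M, u, v, huv⟩ := S.realize_exists ε
  obtain ⟨b, hb, -⟩ := S.realize_mor x (𝟙 K) huv (S.realize_zero B K)
    (by rw [S.pull_id, hε])
  obtain ⟨c, hc, -⟩ := S.ET3 (𝟙 A) (b ≫ biprod.fst) huv ht
    (by simpa using congrArg (· ≫ biprod.fst) hb)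
  exact ⟨c, by rwa [S.push_id] at hc⟩

lemma exists_eq_push_of_pull_eq_zero (ht : S.IsTriangle x y δ) (ε : S.E X K)
    (hε : S.pull y ε = 0) : ∃ a : A ⟶ K, ε = S.push a δ := by
  obtain ⟨M, u, v, huv⟩ := S.realize_exists ε
  obtain ⟨b, -, hb⟩ := S.realize_mor (𝟙 K) y (S.realize_zero K B) huv
    (by rw [S.push_id, hε])
  obtain ⟨a, ha, -⟩ := S.ET3op (biprod.inr ≫ b) (𝟙 X) ht huv
    (by simpa using congrArg (biprod.inr ≫ ·) hb)
  exact ⟨a, by rwa [S.pull_id, eq_comm] at ha⟩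

lemma exists_push_eq_of_push_eq_zero (ht : S.IsTriangle x y δ) (η : S.E K B)
    (hη : S.push y η = 0) : ∃ ε : S.E K A, S.push x ε = η := by
  obtain ⟨N, u, v, huv⟩ := S.realize_exists η
  obtain ⟨E₀, _, _, _, _, θ, -, hT, -, -, -, -, hθ⟩ := S.ET4 x y δ u v η ht huv
  rw [hη] at hT
  obtain ⟨σ, hσ⟩ := exists_section_of_isTriangle_zero hT
  refine ⟨S.pull σ θ, ?_⟩
  rw [← S.pull_push, hθ, ← S.pull_comp, hσ, S.pull_id]

lemma exists_pull_eq_of_pull_eq_zero (ht : S.IsTriangle x y δ) (η : S.E B K)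
    (hη : S.pull x η = 0) : ∃ ω : S.E X K, S.pull y ω = η := by
  obtain ⟨M, u, v, huv⟩ := S.realize_exists η
  obtain ⟨E₀, _, _, _, _, θ, -, hT, -, -, -, -, hθ⟩ := S.ET4op x y δ u v η ht huv
  rw [hη] at hT
  obtain ⟨ρ, hρ⟩ := exists_retraction_of_isTriangle_zero hT
  refine ⟨S.push ρ θ, ?_⟩
  rw [S.pull_push, hθ, ← S.push_comp, hρ, S.push_id]

end Triangles

section Isomorphisms

variable {A B X A' B' X' : 𝒞} {x : A ⟶ B} {y : B ⟶ X} {δ : S.E X A}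

-- `𝟙 - e` factors through `x` and is killed by `x`, so it squares to zero.
lemma isIso_of_comp_eq_self (ht : S.IsTriangle x y δ) (e : B ⟶ B) (hx : x ≫ e = x)
    (hy : e ≫ y = y) : IsIso e := by
  obtain ⟨a, ha⟩ := exists_lift_of_comp_eq_zero ht (𝟙 B - e) (by simp [hy])
  have hsq : (𝟙 B - e) ≫ (𝟙 B - e) = 0 := by nth_rw 1 [← ha]; simp [hx]
  have hnil : IsNilpotent ((1 : End B) - show End B from e) :=
    ⟨2, by rw [pow_two, End.mul_def]; exact hsq⟩
  rw [← isUnit_iff_isIso]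
  simpa using hnil.isUnit_one_sub

lemma isIso_of_comp_eq_self_of_comp_eq_self {x' : A' ⟶ B'} {y' : B' ⟶ X'} {δ' : S.E X' A'}
    (ht : S.IsTriangle x y δ) (ht' : S.IsTriangle x' y' δ') (b : B ⟶ B') (b' : B' ⟶ B)
    (hx : x ≫ b ≫ b' = x) (hy : (b ≫ b') ≫ y = y)
    (hx' : x' ≫ b' ≫ b = x') (hy' : (b' ≫ b) ≫ y' = y') : IsIso b := by
  have := isIso_of_comp_eq_self ht _ hx hy
  have := isIso_of_comp_eq_self ht' _ hx' hy'
  have : IsSplitEpi b :=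
    IsSplitEpi.mk' ⟨inv (b' ≫ b) ≫ b', by rw [Category.assoc, IsIso.inv_hom_id]⟩
  have : Mono b :=
    (IsSplitMono.mk' ⟨b' ≫ inv (b ≫ b'), by rw [← Category.assoc, IsIso.hom_inv_id]⟩).mono
  exact isIso_of_mono_of_isSplitEpi b

lemma isIso_of_isTriangle {x' : A ⟶ B'} {y' : B' ⟶ X} (ht : S.IsTriangle x y δ)
    (ht' : S.IsTriangle x' y' δ) (b : B ⟶ B') (hx : x ≫ b = x') (hy : b ≫ y' = y) :
    IsIso b := by
  obtain ⟨b', hx', hy'⟩ := S.realize_mor (𝟙 A) (𝟙 X) ht' ht (by rw [S.push_id, S.pull_id])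
  rw [Category.id_comp] at hx'
  rw [Category.comp_id] at hy'
  exact isIso_of_comp_eq_self_of_comp_eq_self ht ht' b b'
    (by rw [reassoc_of% hx, hx']) (by rw [Category.assoc, ← hy', hy])
    (by rw [reassoc_of% hx', hx]) (by rw [Category.assoc, hy, hy'])

lemma exists_iso_of_isTriangle {x' : A ⟶ B'} {y' : B' ⟶ X} (ht : S.IsTriangle x y δ)
    (ht' : S.IsTriangle x' y' δ) : ∃ b : B ≅ B', x ≫ b.hom = x' ∧ b.hom ≫ y' = y := by
  obtain ⟨b, hx, hy⟩ := S.realize_mor (𝟙 A) (𝟙 X) ht ht' (by rw [S.push_id, S.pull_id])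
  rw [Category.id_comp] at hx
  rw [Category.comp_id] at hy
  have := isIso_of_isTriangle ht ht' b hx hy.symm
  exact ⟨asIso b, hx, hy.symm⟩

lemma isTriangle_iso_comp (ht : S.IsTriangle x y δ) (α : A' ≅ A) :
    S.IsTriangle (α.hom ≫ x) y (S.push α.inv δ) := by
  obtain ⟨B', x', y', ht'⟩ := S.realize_exists (S.push α.inv δ)
  obtain ⟨b, hx, hy⟩ := S.realize_mor α.hom (𝟙 X) ht' ht
    (by rw [← S.push_comp, α.inv_hom_id, S.push_id, S.pull_id])
  obtain ⟨b', hx', hy'⟩ := S.realize_mor α.inv (𝟙 X) ht ht' (by rw [S.pull_id])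
  rw [Category.comp_id] at hy hy'
  have := isIso_of_comp_eq_self_of_comp_eq_self ht' ht b b'
    (by rw [reassoc_of% hx, hx', α.hom_inv_id_assoc])
    (by rw [Category.assoc, ← hy', ← hy])
    (by rw [reassoc_of% hx', hx, α.inv_hom_id_assoc])
    (by rw [Category.assoc, ← hy, ← hy'])
  simpa [hx, hy] using S.realize_iso x' y' _ (asIso b) ht'

lemma exists_isTriangle_of_section {d : A ⟶ B} (ht : S.IsTriangle d y 0) (τ : X ⟶ B)
    (hτ : τ ≫ y = 𝟙 X) : ∃ p : B ⟶ A, S.IsTriangle τ p 0 := by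
  have hd := comp_eq_zero_of_isTriangle ht
  have := isIso_of_isTriangle (S.realize_zero A X) ht (biprod.desc d τ) (by simp)
    (by ext <;> simp [hd, hτ])
  have h := S.realize_iso _ _ _ (biprod.braiding X A ≪≫ asIso (biprod.desc d τ))
    (S.realize_zero X A)
  exact ⟨_, by simpa using h⟩

end Isomorphisms

section Pushout

variable {A B₁ C₁ B₂ C₂ M Z : 𝒞} {x₁ : A ⟶ B₁} {y₁ : B₁ ⟶ C₁} {δ₁ : S.E C₁ A}
  {x₂ : A ⟶ B₂} {y₂ : B₂ ⟶ C₂} {δ₂ : S.E C₂ A}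

lemma exists_section_pull_eq (h₁ : S.IsTriangle x₁ y₁ δ₁) {d : C₁ ⟶ Z} {e : Z ⟶ C₂}
    (hde : S.IsTriangle d e 0) {θ : S.E Z A} (hθd : S.pull d θ = δ₁)
    (hθe : S.push x₁ θ = S.pull e (S.push x₁ δ₂)) :
    ∃ τ : C₂ ⟶ Z, τ ≫ e = 𝟙 C₂ ∧ S.pull τ θ = δ₂ := by
  obtain ⟨σ, hσ⟩ := exists_section_of_isTriangle_zero hde
  have hpush : S.push x₁ (S.pull σ θ - δ₂) = 0 := by
    rw [S.push_sub, ← S.pull_push, hθe, ← S.pull_comp, hσ, S.pull_id, sub_self]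
  obtain ⟨c, hc⟩ := exists_eq_pull_of_push_eq_zero h₁ _ hpush
  refine ⟨σ - c ≫ d, ?_, ?_⟩
  · simp [hσ, comp_eq_zero_of_isTriangle hde]
  · rw [S.sub_pull, S.pull_comp, hθd, ← hc, sub_sub_cancel]

-- `M` is a pushout of `x₂` along `x₁` (dual of Nakaoka–Palu, Prop. 3.15), so `B₂ ⟶ M` has the
-- same cone `C₁` as `x₁`.
lemma exists_isTriangle_of_isTriangle_push (h₁ : S.IsTriangle x₁ y₁ δ₁)
    (h₂ : S.IsTriangle x₂ y₂ δ₂) {m : B₁ ⟶ M} {n : M ⟶ C₂}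
    (hM : S.IsTriangle m n (S.push x₁ δ₂)) :
    ∃ (m' : B₂ ⟶ M) (n' : M ⟶ C₁) (δ' : S.E C₁ B₂), S.IsTriangle m' n' δ' := by
  obtain ⟨Z, h, k, d, e, θ, hhk, hde, -, -, -, hθd, hθe⟩ := S.ET4 x₁ y₁ δ₁ m n _ h₁ hM
  rw [← S.push_comp, comp_eq_zero_of_isTriangle h₁, S.zero_push] at hde
  obtain ⟨τ, hτe, hτθ⟩ := exists_section_pull_eq h₁ hde hθd hθe
  obtain ⟨p, hτp⟩ := exists_isTriangle_of_section hde τ hτe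
  obtain ⟨Y, i, _, _, _, δ'', hip, hY, -, -, -, -, -⟩ := S.ET4op τ p 0 h k θ hτp hhk
  rw [hτθ] at hY
  obtain ⟨β, -, -⟩ := exists_iso_of_isTriangle h₂ hY
  exact ⟨_, _, _, isTriangle_iso_comp hip β⟩

end Pushout

namespace CotorsionPair

variable {𝒬 ℛ : Set 𝒞} {A B X : 𝒞} {x : A ⟶ B} {y : B ⟶ X} {δ : S.E X A}

-- The `ℛ`-envelope `B ⟶ R ⟶ Q` splits, and hereditarity puts `Q`, hence the summand `B`, in `ℛ`.
lemma mem_right_of_isTriangle (hcp : S.CotorsionPair 𝒬 ℛ) (hh : S.Hereditary 𝒬 ℛ)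
    (ht : S.IsTriangle x y δ) (hA : A ∈ ℛ) (hX : X ∈ ℛ) : B ∈ ℛ := by
  obtain ⟨hvan, -, happrox⟩ := hcp
  obtain ⟨R, Q, a, b, η, hab, hQ, hR⟩ := happrox B
  obtain ⟨ε, hε⟩ := exists_push_eq_of_push_eq_zero ht η (hvan Q X hQ hX _)
  rw [← hε, hvan Q A hQ hA ε, S.push_zero] at hab
  obtain ⟨V, _, _, _, _, _, hAV, hXV, -⟩ := S.ET4 x y δ a b 0 ht hab
  have hQℛ : Q ∈ ℛ := hh.2 _ _ _ hXV hX (hh.2 _ _ _ hAV hA hR)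
  obtain ⟨σ, hσ⟩ := exists_section_of_isTriangle_zero hab
  obtain ⟨_, hσp⟩ := exists_isTriangle_of_section hab σ hσ
  exact hh.2 _ _ _ hσp hQℛ hR

lemma mem_left_of_isTriangle (hcp : S.CotorsionPair 𝒬 ℛ) (hh : S.Hereditary 𝒬 ℛ)
    (ht : S.IsTriangle x y δ) (hA : A ∈ 𝒬) (hX : X ∈ 𝒬) : B ∈ 𝒬 := by
  obtain ⟨hvan, happrox, -⟩ := hcp
  obtain ⟨R, Q, a, b, ζ, hab, hQ, hR⟩ := happrox B
  obtain ⟨ω, hω⟩ := exists_pull_eq_of_pull_eq_zero ht ζ (hvan A R hA hR _)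
  rw [← hω, hvan X R hX hR ω, S.pull_zero] at hab
  obtain ⟨E₀, _, _, _, _, _, hEX, hRA, -⟩ := S.ET4op x y δ a b 0 ht hab
  have hR𝒬 : R ∈ 𝒬 := hh.1 _ _ _ hRA (hh.1 _ _ _ hEX hQ hX) hA
  obtain ⟨σ, hσ⟩ := exists_section_of_isTriangle_zero hab
  obtain ⟨_, hσp⟩ := exists_isTriangle_of_section hab σ hσ
  exact hh.1 _ _ _ hσp hQ hR𝒬

-- Pulling a `𝒬`-cover of `B` back along `x` gives `R ⟶ K ⟶ A` with `K ∈ 𝒬`, and `E(K, R₀) = 0`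
-- makes `ε` a pushout of its class.
lemma exists_pull_eq (hcp : S.CotorsionPair 𝒬 ℛ) (hh : S.Hereditary 𝒬 ℛ)
    (ht : S.IsTriangle x y δ) (hX : X ∈ 𝒬) {R₀ : 𝒞} (hR₀ : ∀ K ∈ 𝒬, ∀ θ : S.E K R₀, θ = 0)
    (ε : S.E A R₀) : ∃ ω : S.E B R₀, S.pull x ω = ε := by
  obtain ⟨R, Q, s, t, ζ, hst, hQ, -⟩ := hcp.2.1 B
  obtain ⟨K, _, _, _, _, _, hKX, hRA, -⟩ := S.ET4op x y δ s t ζ ht hst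
  obtain ⟨a, ha⟩ := exists_eq_push_of_pull_eq_zero hRA ε (hR₀ K (hh.1 _ _ _ hKX hQ hX) _)
  exact ⟨S.push a ζ, by rw [S.pull_push, ha]⟩

end CotorsionPair

end ExtriangulatedStructure

open CategoryTheory Limits in
theorem stmt7_general {𝒞 : Type u} [Category.{v} 𝒞] [Preadditive 𝒞] [HasBinaryBiproducts 𝒞]
    (S : ExtriangulatedStructure.{w} 𝒞)
    (𝒬 ℛ Qt Rt : Set 𝒞)
    (hcp1 : S.CotorsionPair 𝒬 Rt) (hh1 : S.Hereditary 𝒬 Rt)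
    (hcp2 : S.CotorsionPair Qt ℛ) (hh2 : S.Hereditary Qt ℛ)
    (hQQ : Qt ⊆ 𝒬)
    (W : Set 𝒞)
    (hW : W = {X : 𝒞 | ∃ (R Q : 𝒞) (f : X ⟶ R) (g : R ⟶ Q) (δ : S.E Q X),
        S.IsTriangle f g δ ∧ R ∈ Rt ∧ Q ∈ Qt})
    {W0 Y W1 : 𝒞} (f : W0 ⟶ Y) (g : Y ⟶ W1) (δ : S.E W1 W0)
    (hT : S.IsTriangle f g δ) (h0 : W0 ∈ W) (h1 : W1 ∈ W) :
    Y ∈ W := by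
  subst hW
  obtain ⟨R0, Q0, f0, g0, δ0, ht0, hR0, hQ0⟩ := h0
  obtain ⟨R1, Q1, f1, g1, δ1, ht1, hR1, hQ1⟩ := h1
  obtain ⟨ω, hω⟩ := hcp2.exists_pull_eq hh2 ht1 hQ1 (fun K hK ↦ hcp1.1 K R0 (hQQ hK) hR0)
    (S.push f0 δ)
  obtain ⟨T, r, s, hrs⟩ := S.realize_exists ω
  obtain ⟨P, i, p, _, _, δP, hPT, hRP, -⟩ := S.ET4op f1 g1 δ1 r s ω ht1 hrs
  rw [hω] at hRP
  obtain ⟨j, k, _, hYP⟩ := ExtriangulatedStructure.exists_isTriangle_of_isTriangle_push ht0 hT hRP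
  obtain ⟨Z, _, _, _, _, _, hYT, hQZ, -⟩ := S.ET4 j k _ i p δP hYP hPT
  exact ⟨T, Z, _, _, _, hYT, hcp1.mem_right_of_isTriangle hh1 hrs hR0 hR1,
    hcp2.mem_left_of_isTriangle hh2 hQZ hQ0 hQ1⟩

open CategoryTheory Limits in
/-- the class `W` is closed under extensions. -/
theorem stmt7 {𝒞 : Type u} [Category.{v} 𝒞] [Preadditive 𝒞] [HasBinaryBiproducts 𝒞]
    (S : ExtriangulatedStructure.{w} 𝒞) (hWIC : S.WIC)
    (𝒬 ℛ Qt Rt : Set 𝒞)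
    (hcp1 : S.CotorsionPair 𝒬 Rt) (hh1 : S.Hereditary 𝒬 Rt)
    (hcp2 : S.CotorsionPair Qt ℛ) (hh2 : S.Hereditary Qt ℛ)
    (hRR : Rt ⊆ ℛ) (hQQ : Qt ⊆ 𝒬) (hmeet : Qt ∩ ℛ = 𝒬 ∩ Rt)
    (W : Set 𝒞)
    (hW : W = {X : 𝒞 | ∃ (R Q : 𝒞) (f : X ⟶ R) (g : R ⟶ Q) (δ : S.E Q X),
        S.IsTriangle f g δ ∧ R ∈ Rt ∧ Q ∈ Qt})
    {W0 Y W1 : 𝒞} (f : W0 ⟶ Y) (g : Y ⟶ W1) (δ : S.E W1 W0)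
    (hT : S.IsTriangle f g δ) (h0 : W0 ∈ W) (h1 : W1 ∈ W) :
    Y ∈ W :=
  stmt7_general S 𝒬 ℛ Qt Rt hcp1 hh1 hcp2 hh2 hQQ W hW f g δ hT h0 h1
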